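/- arXiv:2605.06898 — 3 statements merged into one kernel-verified Lean document; each statement's English description precedes it below -/
import Mathlib

section
/- There exist an interface (P, C) and two agentic machines X₁ and X₂ over (P, C) such that: every state of X₁ is LM-indistinguishable from some state of X₂ and every state of X₂ is LM-indistinguishable from some state of X₁, yet there is no embedding of X₁ into X₂ and no embedding of X₂ into X₁. Concretely, let S₁ = {s₁} and S₂ = {s₂} be disjoint singletons, P = S₁ ⊔ S₂, and C any nonempty set; let X₁ have state set (S₁ × {0,1}) ⊔ S₂ and X₂ have state set S₁ ⊔ (S₂ × {0,1}), with prompt functions sending (sᵢ, j) to sᵢ and sᵢ to sᵢ, and with both harness functions stuttering: h(t, c) = t for every state t and completion c. These X₁ and X₂ witness the claim. -/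
/-- Result of a harness transition: an ordinary state, the halting point `𝟏`,
or the divergence point `↑`. This models `S ∪ {𝟏, ↑}`. -/
inductive Res (S : Type*) where
  | state : S → Res S
  | halt : Res S
  | diverge : Res S

/-- Extend a map on states to results, fixing `𝟏` and `↑`. -/
def Res.map {S : Type*} {T : Type*} (f : S → T) : Res S → Res T
  | .state s => .state (f s)
  | .halt => .halt
  | .diverge => .diverge

/-- An agentic machine over the interface `(P, C)`: a state space `S`, a prompt
function `p : S → P`, and a harness function `h : S × C → S ∪ {𝟏, ↑}`. -/
structure Machine (P : Type*) (C : Type*) (S : Type*) where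
  prompt : S → P
  harness : S → C → Res S

/-- One step of the run: apply the harness from a state; `𝟏` and `↑` are absorbing. -/
def stepR {P C S : Type*} (M : Machine P C S) (x : Res S) (c : C) : Res S :=
  match x with
  | .state s => M.harness s c
  | r => r

/-- The run prefix `x_k^X(s; σ)`: the outcome after consuming the completion list `σ`,
starting from the state `s`. -/
def runR {P C S : Type*} (M : Machine P C S) (s : S) (σ : List C) : Res S :=
  σ.foldl (stepR M) (.state s)

/-- The visibility map `vis_X`: a state is visible as its prompt; `𝟏` and `↑` are fixed. -/
def vis {P C S : Type*} (M : Machine P C S) (x : Res S) : Res P :=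
  Res.map M.prompt x

/-- LM-indistinguishability of pointed states `(M, s)` and `(M', s')`: after any shared
finite completion sequence `σ = c₁ ⋯ cₙ` and any prefix length `k ≤ n`, the visible
outcomes of the two run prefixes agree. -/
def Indist {P C S S' : Type*} (M : Machine P C S) (s : S)
    (M' : Machine P C S') (s' : S') : Prop :=
  ∀ (σ : List C) (k : ℕ), k ≤ σ.length →
    vis M (runR M s (σ.take k)) = vis M' (runR M' s' (σ.take k))

/-- `e` is an embedding of the agentic machine `M'` into `M`: an injective map on states
which preserves prompts and commutes with the harness (with `e` extended by `e 𝟏 = 𝟏`,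
`e ↑ = ↑`). -/
def IsEmbedding {P C S S' : Type*} (M' : Machine P C S') (M : Machine P C S)
    (e : S' → S) : Prop :=
  Function.Injective e ∧
  (∀ s' : S', M.prompt (e s') = M'.prompt s') ∧
  (∀ (s' : S') (c : C), M.harness (e s') c = Res.map e (M'.harness s' c))

/-- The one-step state-reachable set `Reach_X(x₀)`. -/
def Reach {P C S : Type*} (M : Machine P C S) (x₀ : S) : Set S :=
  {t | ∃ c : C, M.harness x₀ c = Res.state t}

/-- `(M, x₀)` completion-generates `M'`: there is an embedding of `M'` into `M` whose
image (on states) is contained in `Reach_M(x₀)`. -/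
def CompGen {P C S S' : Type*} (M : Machine P C S) (x₀ : S)
    (M' : Machine P C S') : Prop :=
  ∃ e : S' → S, IsEmbedding M' M e ∧ Set.range e ⊆ Reach M x₀

/-- An SPE state of `M`: a state from which `M` completion-generates itself. -/
def SPEState {P C S : Type*} (M : Machine P C S) (x : S) : Prop :=
  CompGen M x M

/-- The machine `X₁` with state set `(S₁ × {0,1}) ⊔ S₂` (with `S₁ = {s₁}`, `S₂ = {s₂}`
disjoint singletons and `P = S₁ ⊔ S₂`), prompts `(s₁, j) ↦ s₁`, `s₂ ↦ s₂`, and a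
stuttering harness `h(t, c) = t`. -/
def X₁ (C : Type*) : Machine (Unit ⊕ Unit) C ((Unit × Bool) ⊕ Unit) where
  prompt := fun t =>
    match t with
    | .inl _ => .inl ()
    | .inr _ => .inr ()
  harness := fun t _ => .state t

/-- The machine `X₂` with state set `S₁ ⊔ (S₂ × {0,1})`, prompts `s₁ ↦ s₁`,
`(s₂, j) ↦ s₂`, and a stuttering harness `h(t, c) = t`. -/
def X₂ (C : Type*) : Machine (Unit ⊕ Unit) C (Unit ⊕ (Unit × Bool)) where
  prompt := fun t =>
    match t with
    | .inl _ => .inl ()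
    | .inr _ => .inr ()
  harness := fun t _ => .state t

lemma run_stutter {P C S : Type*} (M : Machine P C S)
    (hM : ∀ (t : S) (c : C), M.harness t c = Res.state t)
    (s : S) (σ : List C) : runR M s σ = .state s := by
  induction σ with
  | nil => rfl
  | cons c σ ih =>
      simp only [runR, List.foldl_cons, stepR, hM] at *
      exact ih

lemma indist_of_prompt {P C S S' : Type*} (M : Machine P C S) (s : S)
    (M' : Machine P C S') (s' : S')
    (hM : ∀ (t : S) (c : C), M.harness t c = Res.state t)
    (hM' : ∀ (t : S') (c : C), M'.harness t c = Res.state t)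
    (hp : M.prompt s = M'.prompt s') : Indist M s M' s' := by
  intro σ k _
  rw [run_stutter M hM, run_stutter M' hM']
  simp [vis, Res.map, hp]

/-- For any nonempty completion set `C`, every state of `X₁` is
LM-indistinguishable from some state of `X₂` and vice versa, yet there is no embedding
of `X₁` into `X₂` and no embedding of `X₂` into `X₁`. -/
theorem indistinguishable_machines_without_embedding (C : Type*) [Nonempty C] :
    (∀ t₁ : (Unit × Bool) ⊕ Unit, ∃ t₂ : Unit ⊕ (Unit × Bool),
        Indist (X₁ C) t₁ (X₂ C) t₂) ∧
    (∀ t₂ : Unit ⊕ (Unit × Bool), ∃ t₁ : (Unit × Bool) ⊕ Unit,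
        Indist (X₂ C) t₂ (X₁ C) t₁) ∧
    (¬ ∃ e : ((Unit × Bool) ⊕ Unit) → (Unit ⊕ (Unit × Bool)),
        IsEmbedding (X₁ C) (X₂ C) e) ∧
    (¬ ∃ e : (Unit ⊕ (Unit × Bool)) → ((Unit × Bool) ⊕ Unit),
        IsEmbedding (X₂ C) (X₁ C) e) := by
  refine ⟨?_, ?_, ?_, ?_⟩
  · rintro (⟨_, b⟩ | _)
    · exact ⟨.inl (), indist_of_prompt _ _ _ _ (fun _ _ => rfl) (fun _ _ => rfl) rfl⟩
    · exact ⟨.inr ((), true), indist_of_prompt _ _ _ _ (fun _ _ => rfl) (fun _ _ => rfl) rfl⟩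
  · rintro (_ | ⟨_, b⟩)
    · exact ⟨.inl ((), true), indist_of_prompt _ _ _ _ (fun _ _ => rfl) (fun _ _ => rfl) rfl⟩
    · exact ⟨.inr (), indist_of_prompt _ _ _ _ (fun _ _ => rfl) (fun _ _ => rfl) rfl⟩
  · rintro ⟨e, hinj, hp, -⟩
    have h1 : e (.inl ((), true)) = .inl () := by
      have := hp (.inl ((), true))
      rcases h : e (.inl ((), true)) with _ | ⟨_, _⟩
      · rfl
      · rw [h] at this; simp [X₁, X₂] at this
    have h2 : e (.inl ((), false)) = .inl () := by
      have := hp (.inl ((), false))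
      rcases h : e (.inl ((), false)) with _ | ⟨_, _⟩
      · rfl
      · rw [h] at this; simp [X₁, X₂] at this
    have := hinj (h1.trans h2.symm)
    simp at this
  · rintro ⟨e, hinj, hp, -⟩
    have h1 : e (.inr ((), true)) = .inr () := by
      have := hp (.inr ((), true))
      rcases h : e (.inr ((), true)) with ⟨_, _⟩ | _
      · rw [h] at this; simp [X₁, X₂] at this
      · rfl
    have h2 : e (.inr ((), false)) = .inr () := by
      have := hp (.inr ((), false))
      rcases h : e (.inr ((), false)) with ⟨_, _⟩ | _
      · rw [h] at this; simp [X₁, X₂] at this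
      · rfl
    have := hinj (h1.trans h2.symm)
    simp at this
end

section
/- Let X = (S_X, p_X, h_X) and Y = (S_Y, p_Y, h_Y) be agentic machines over the same interface (P, C), let e : S_X → S_Y be an embedding of X into Y, and let x ∈ S_X. If e(x) is an SPE state of Y, then x is an SPE state of X. -/
lemma Res.map_injective {S T : Type*} {f : S → T} (hf : Function.Injective f) :
    Function.Injective (Res.map f) := by
  intro a b hab
  cases a <;> cases b <;> simp_all [Res.map]
  exact hf hab

lemma Res.map_map {S T U : Type*} (f : S → T) (g : T → U) (r : Res S) :
    Res.map g (Res.map f r) = Res.map (g ∘ f) r := by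
  cases r <;> rfl

/-- SPE states under embeddings: if `e` embeds `X` into `Y` and `e x` is
an SPE state of `Y`, then `x` is an SPE state of `X`. -/
theorem spe_state_of_embedded_spe {P C SX SY : Type*}
    (X : Machine P C SX) (Y : Machine P C SY)
    (e : SX → SY) (he : IsEmbedding X Y e) (x : SX)
    (h : SPEState Y (e x)) :
    SPEState X x := by
  obtain ⟨f, ⟨finj, fprompt, fharn⟩, frange⟩ := h
  obtain ⟨einj, eprompt, eharn⟩ := he
  have key : ∀ s : SX, ∃ t : SX, e t = f (e s) ∧ ∃ c, X.harness x c = Res.state t := by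
    intro s
    obtain ⟨c, hc⟩ := frange (Set.mem_range_self (e s))
    rw [eharn] at hc
    cases hx : X.harness x c with
    | state t =>
        refine ⟨t, ?_, c, hx⟩
        rw [hx] at hc; simpa [Res.map] using hc
    | halt => rw [hx] at hc; simp [Res.map] at hc
    | diverge => rw [hx] at hc; simp [Res.map] at hc
  choose g hg1 hg2 using key
  refine ⟨g, ⟨?_, ?_, ?_⟩, ?_⟩
  · intro a b hab
    apply einj; apply finj
    rw [← hg1, ← hg1, hab]
  · intro s
    rw [← eprompt (g s), hg1, fprompt, eprompt]
  · intro s c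
    apply Res.map_injective einj
    have h1 : Res.map e (X.harness (g s) c) = Y.harness (e (g s)) c := (eharn _ _).symm
    rw [h1, hg1, fharn, eharn, Res.map_map, Res.map_map]
    congr 1
    funext a
    simp [Function.comp, hg1]
  · rintro t ⟨s, rfl⟩
    exact hg2 s
end

section
/- In the agent-communication transition system, every configuration reachable by finitely many applications of transformations (1)–(3) from an initial configuration with no edges is not deadlocked; that is, it is impossible to reach a configuration in which the edge set is nonempty and every node is asleep. -/
/-- A configuration of the agent-communication transition system: a finite set of
nodes, the set of awake nodes (the remaining nodes are asleep), and a set of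
directed edges. -/
structure Config where
  nodes : Finset ℕ
  awake : Finset ℕ
  edges : Finset (ℕ × ℕ)

/-- The outgoing edges of a node `x` in an edge set `E`. -/
def outEdges (E : Finset (ℕ × ℕ)) (x : ℕ) : Finset (ℕ × ℕ) :=
  E.filter (fun e => e.1 = x)

/-- The allowed transformations of the agent-communication transition system. -/
inductive Step : Config → Config → Prop
  /-- (1) Add a fresh node `a`, marked awake (`st = true`) or asleep (`st = false`),
  with no incident edges. -/
  | addNode (K : Config) (a : ℕ) (st : Bool) (ha : a ∉ K.nodes) :
      Step K
        { nodes := insert a K.nodes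
          awake := if st then insert a K.awake else K.awake
          edges := K.edges }
  /-- (2) Choose an awake node `a` and a nonempty set `B ⊆ A \ {a}`; add the edges
  `(a, b)` for every `b ∈ B`, mark `a` asleep and every `b ∈ B` awake, and for every
  `b ∈ B` that changes from asleep to awake delete all outgoing edges `(b, c)`. -/
  | send (K : Config) (a : ℕ) (B : Finset ℕ)
      (haN : a ∈ K.nodes) (haW : a ∈ K.awake)
      (hB : B.Nonempty) (hBsub : B ⊆ K.nodes.erase a) :
      Step K
        { nodes := K.nodes
          awake := (K.awake.erase a) ∪ B
          edges := (K.edges.filter (fun e => ¬(e.1 ∈ B ∧ e.1 ∉ K.awake))) ∪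
            B.image (fun b => (a, b)) }
  /-- (3) Choose an awake node `b`; mark it asleep, delete every edge `(x, b)`, and
  mark awake every node `x` whose out-degree thereby becomes zero. -/
  | sleep (K : Config) (b : ℕ) (hbN : b ∈ K.nodes) (hbW : b ∈ K.awake) :
      Step K
        { nodes := K.nodes
          awake := (K.awake.erase b) ∪
            (K.nodes.filter (fun x =>
              (outEdges K.edges x).Nonempty ∧
              outEdges (K.edges.filter (fun e => e.2 ≠ b)) x = ∅))
          edges := K.edges.filter (fun e => e.2 ≠ b) }

/-- A configuration is deadlocked if its edge set is nonempty and every node is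
asleep. -/
def Deadlocked (K : Config) : Prop :=
  K.edges.Nonempty ∧ ∀ x ∈ K.nodes, x ∉ K.awake

/-- Auxiliary invariant. -/
def CfgInv (K : Config) : Prop :=
  K.awake ⊆ K.nodes ∧
  (∀ e ∈ K.edges, e.1 ∈ K.nodes ∧ e.2 ∈ K.nodes) ∧
  (∀ e ∈ K.edges, e.1 ∉ K.awake) ∧
  ∃ r : ℕ → ℕ,
    (∀ e ∈ K.edges, e.2 ∈ K.awake ∨ ∃ z, (e.2, z) ∈ K.edges) ∧
    (∀ e ∈ K.edges, e.2 ∈ K.awake ∨ r e.1 < r e.2)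

theorem step_inv {K K' : Config} (h : Step K K') (hinv : CfgInv K) : CfgInv K' := by
  obtain ⟨hWN, hEN, hC, r, hA, hR⟩ := hinv
  cases h with
  | addNode a st ha =>
    have hWsub : K.awake ⊆ (if st then insert a K.awake else K.awake) := by
      cases st <;> simp [Finset.subset_insert]
    refine ⟨?_, ?_, ?_, r, ?_, ?_⟩
    · intro x hx
      cases st with
      | false => exact Finset.mem_insert_of_mem (hWN (by simpa using hx))
      | true =>
        rcases Finset.mem_insert.mp (by simpa using hx) with h | h
        · exact h ▸ Finset.mem_insert_self x K.nodes
        · exact Finset.mem_insert_of_mem (hWN h)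
    · intro e he
      exact ⟨Finset.mem_insert_of_mem (hEN e he).1, Finset.mem_insert_of_mem (hEN e he).2⟩
    · intro e he hmem
      cases st with
      | false => exact hC e he hmem
      | true =>
        simp only [if_true] at hmem
        rcases Finset.mem_insert.mp hmem with h1 | h1
        · exact ha (h1 ▸ (hEN e he).1)
        · exact hC e he h1
    · intro e he
      rcases hA e he with h1 | h1
      · exact Or.inl (hWsub h1)
      · exact Or.inr h1
    · intro e he
      rcases hR e he with h1 | h1
      · exact Or.inl (hWsub h1)
      · exact Or.inr h1
  | send a B haN haW hB hBsub =>
    have haB : a ∉ B := fun h => (Finset.mem_erase.mp (hBsub h)).1 rfl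
    set M := K.nodes.sup r with hM
    set r' : ℕ → ℕ := fun n => if n = a then M + 1 else r n with hr'
    -- membership characterization for new edges
    have hEsrc : ∀ e ∈ ((K.edges.filter (fun e => ¬(e.1 ∈ B ∧ e.1 ∉ K.awake))) ∪
        B.image (fun b => (a, b))), (e ∈ K.edges ∧ e.1 ∉ B ∧ e.1 ∉ K.awake ∧ e.1 ≠ a) ∨
        (e.1 = a ∧ e.2 ∈ B) := by
      intro e he
      rcases Finset.mem_union.mp he with h1 | h1
      · obtain ⟨h2, h3⟩ := Finset.mem_filter.mp h1
        have h4 : e.1 ∉ K.awake := hC e h2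
        refine Or.inl ⟨h2, ?_, h4, fun hh => h4 (hh ▸ haW)⟩
        intro hb
        exact h3 ⟨hb, h4⟩
      · obtain ⟨b, hb1, hb2⟩ := Finset.mem_image.mp h1
        exact Or.inr ⟨(congrArg Prod.fst hb2).symm, (congrArg Prod.snd hb2).symm ▸ hb1⟩
    refine ⟨?_, ?_, ?_, r', ?_, ?_⟩
    · intro x hx
      rcases Finset.mem_union.mp hx with h1 | h1
      · exact hWN (Finset.mem_of_mem_erase h1)
      · exact Finset.mem_of_mem_erase (hBsub h1)
    · intro e he
      rcases hEsrc e he with ⟨h1, _⟩ | ⟨h1, h2⟩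
      · exact hEN e h1
      · exact ⟨h1 ▸ haN, Finset.mem_of_mem_erase (hBsub h2)⟩
    · intro e he hmem
      rcases hEsrc e he with ⟨h1, h2, h3, h4⟩ | ⟨h1, h2⟩
      · rcases Finset.mem_union.mp hmem with h5 | h5
        · exact h3 (Finset.mem_of_mem_erase h5)
        · exact h2 h5
      · rcases Finset.mem_union.mp hmem with h5 | h5
        · exact (Finset.mem_erase.mp h5).1 h1
        · exact haB (h1 ▸ h5)
    · -- every target awake or has out-edge
      intro e he
      rcases hEsrc e he with ⟨h1, h2, h3, h4⟩ | ⟨h1, h2⟩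
      · by_cases ht : e.2 ∈ B
        · exact Or.inl (Finset.mem_union_right _ ht)
        · by_cases hta : e.2 = a
          · -- a has a new out-edge to some b ∈ B
            obtain ⟨b0, hb0⟩ := hB
            refine Or.inr ⟨b0, Finset.mem_union_right _ ?_⟩
            rw [hta]
            exact Finset.mem_image.mpr ⟨b0, hb0, rfl⟩
          · rcases hA e h1 with h5 | ⟨z, hz⟩
            · exact Or.inl (Finset.mem_union_left _ (Finset.mem_erase.mpr ⟨hta, h5⟩))
            · refine Or.inr ⟨z, Finset.mem_union_left _ (Finset.mem_filter.mpr ⟨hz, ?_⟩)⟩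
              intro hh
              exact ht hh.1
      · exact Or.inl (Finset.mem_union_right _ h2)
    · -- rank condition
      intro e he
      rcases hEsrc e he with ⟨h1, h2, h3, h4⟩ | ⟨h1, h2⟩
      · have hle : r e.1 ≤ M := Finset.le_sup (hEN e h1).1
        have hr1 : r' e.1 = r e.1 := by simp [hr', h4]
        rcases hR e h1 with h5 | h5
        · by_cases hta : e.2 = a
          · refine Or.inr ?_
            rw [hr1, hta]
            simp only [hr', if_pos rfl]
            omega
          · exact Or.inl (Finset.mem_union_left _ (Finset.mem_erase.mpr ⟨hta, h5⟩))
        · refine Or.inr ?_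
          rw [hr1]
          by_cases hta : e.2 = a
          · rw [hta]; simp only [hr', if_pos rfl]; omega
          · simpa [hr', hta] using h5
      · exact Or.inl (Finset.mem_union_right _ h2)
  | sleep b hbN hbW =>
    refine ⟨?_, ?_, ?_, r, ?_, ?_⟩
    · intro x hx
      rcases Finset.mem_union.mp hx with h1 | h1
      · exact hWN (Finset.mem_of_mem_erase h1)
      · exact Finset.mem_of_mem_filter _ h1
    · intro e he
      exact hEN e (Finset.mem_of_mem_filter _ he)
    · intro e he hmem
      obtain ⟨h1, h2⟩ := Finset.mem_filter.mp he
      rcases Finset.mem_union.mp hmem with h3 | h3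
      · exact hC e h1 (Finset.mem_of_mem_erase h3)
      · have h4 := (Finset.mem_filter.mp h3).2.2
        have : e ∈ outEdges (K.edges.filter (fun e => e.2 ≠ b)) e.1 :=
          Finset.mem_filter.mpr ⟨he, rfl⟩
        rw [h4] at this
        exact absurd this (Finset.notMem_empty e)
    · intro e he
      obtain ⟨h1, h2⟩ := Finset.mem_filter.mp he
      rcases hA e h1 with h3 | ⟨z, hz⟩
      · exact Or.inl (Finset.mem_union_left _ (Finset.mem_erase.mpr ⟨h2, h3⟩))
      · by_cases hout : outEdges (K.edges.filter (fun e => e.2 ≠ b)) e.2 = ∅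
        · refine Or.inl (Finset.mem_union_right _ (Finset.mem_filter.mpr
            ⟨(hEN e h1).2, ⟨(e.2, z), Finset.mem_filter.mpr ⟨hz, rfl⟩⟩, hout⟩))
        · obtain ⟨e', he'⟩ := Finset.nonempty_of_ne_empty hout
          obtain ⟨he'1, he'2⟩ := Finset.mem_filter.mp he'
          refine Or.inr ⟨e'.2, ?_⟩
          have : e' = (e.2, e'.2) := by
            rw [← he'2]
          exact this ▸ he'1
    · intro e he
      obtain ⟨h1, h2⟩ := Finset.mem_filter.mp he
      rcases hR e h1 with h3 | h3
      · exact Or.inl (Finset.mem_union_left _ (Finset.mem_erase.mpr ⟨h2, h3⟩))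
      · exact Or.inr h3

/-- Every configuration reachable by finitely many applications of
transformations (1)–(3) from an initial configuration with no edges is not
deadlocked. -/
theorem no_deadlock_reachable (K₀ K : Config)
    (h0edges : K₀.edges = ∅) (h0awake : K₀.awake ⊆ K₀.nodes)
    (hreach : Relation.ReflTransGen Step K₀ K) :
    ¬ Deadlocked K := by
  have hinv : CfgInv K := by
    induction hreach with
    | refl =>
      refine ⟨h0awake, ?_, ?_, fun _ => 0, ?_, ?_⟩ <;> simp [h0edges]
    | tail _ hstep ih => exact step_inv hstep ih
  rintro ⟨hne, hall⟩
  obtain ⟨hWN, hEN, hC, r, hA, hR⟩ := hinv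
  have hnoW : ∀ x, x ∉ K.awake := fun x hx => hall x (hWN hx) hx
  obtain ⟨e, he, hmax⟩ := K.edges.exists_max_image (fun e => r e.2) hne
  rcases hA e he with h1 | ⟨z, hz⟩
  · exact hnoW e.2 h1
  · rcases hR (e.2, z) hz with h2 | h2
    · exact hnoW z h2
    · exact absurd (hmax (e.2, z) hz) (by simpa using h2.not_ge)
end
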